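/- Let (A, m) be a Noetherian local ring with completion Â, and let M : A^s → A^t be an A-linear map given by a matrix over A, and b ∈ A^t. If the inhomogeneous linear system M·u = b has a solution û ∈ Â^s, then it has a solution u ∈ A^s; moreover, for every c ∈ ℕ one can choose u with u ≡ û mod m^c Â^s. -/

import Mathlib

open IsLocalRing LinearMap

universe u

/-! Over a Noetherian ring, `I`-adic completion is exact on finite modules, and finite modules are
`I`-adically separated when `I` lies in the Jacobson radical. Let `f` be the linear map given by `M`.
The image of `b` in the completion of `coker f` vanishes, so by separatedness `b = f u₀`. Then
`û - u₀` lies in the completion of `ker f`; truncating it at level `c` gives `k ∈ ker f`, and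
`u = u₀ + k` agrees with `û` modulo `m^c`. -/

namespace AdicCompletion

variable {R : Type u} [CommRing R] {I : Ideal R}

theorem mem_map_pow_iff_val_eq_zero (hI : I.FG) {n : ℕ} {x : AdicCompletion I R} :
    x ∈ (I ^ n).map (algebraMap R (AdicCompletion I R)) ↔ x.val n = 0 := by
  rw [← Submodule.restrictScalars_mem R, ← Ideal.smul_top_eq_map, pow_smul_top_eq_ker_eval hI]
  rfl

section Pi

variable {ι κ : Type*}

theorem pi_of {M : ι → Type*} [∀ i, AddCommGroup (M i)] [∀ i, Module R (M i)]
    (v : ∀ i, M i) (i : ι) : pi I M (of I _ v) i = of I (M i) (v i) :=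
  rfl

theorem pi_map_mulVecLin [Fintype ι] (A : Matrix κ ι R) (x : AdicCompletion I (ι → R)) (j : κ) :
    pi I _ (map I A.mulVecLin x) j = ∑ i, algebraMap R _ (A j i) * pi I _ x i := by
  induction x using induction_on with | _ a =>
  ext n
  change Ideal.Quotient.mk (I ^ n • ⊤ : Ideal R) (∑ i, A j i * a n i) = _
  rw [val_sum_apply, map_sum]
  rfl

end Pi

theorem mem_range_of_of_mem_range_map {M N : Type*} [AddCommGroup M] [Module R M]
    [AddCommGroup N] [Module R N] {f : M →ₗ[R] N} [IsHausdorff I (N ⧸ range f)] {b : N}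
    (hb : of I N b ∈ range (map I f)) : b ∈ range f := by
  obtain ⟨x, hx⟩ := hb
  have h : of I _ ((range f).mkQ b) = 0 := by
    rw [← map_of, ← hx, map_comp_apply, range_mkQ_comp, map_zero, LinearMap.zero_apply]
  rwa [map_eq_zero_iff _ (of_injective I _), Submodule.mkQ_apply,
    Submodule.Quotient.mk_eq_zero] at h

section Noetherian

variable {M N : Type u} [AddCommGroup M] [Module R M] [AddCommGroup N] [Module R N]
  {f : M →ₗ[R] N} [IsNoetherianRing R] [Module.Finite R M] [Module.Finite R N]

theorem ker_map_le_range_map_subtype_ker : ker (map I f) ≤ range (map I (ker f).subtype) := by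
  intro x hx
  have hexact := map_exact (I := I) (ker f).injective_subtype
    (f.ker_rangeRestrict ▸ exact_subtype_ker_map f.rangeRestrict) f.surjective_rangeRestrict
  refine (hexact x).mp (map_injective I (range f).injective_subtype ?_)
  rw [map_comp_apply, _root_.map_zero]
  exact hx

theorem exists_apply_eq_and_val_sub_eq_zero [IsHausdorff I (N ⧸ range f)]
    {x : AdicCompletion I M} {b : N} (hx : map I f x = of I N b) (c : ℕ) :
    ∃ u, f u = b ∧ (of I M u - x).val c = 0 := by
  obtain ⟨u₀, rfl⟩ := mem_range_of_of_mem_range_map ⟨x, hx⟩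
  obtain ⟨y, hy⟩ := ker_map_le_range_map_subtype_ker (I := I) (f := f) (x := x - of I M u₀)
    (by simp [hx, map_of])
  obtain ⟨k, hk⟩ := Submodule.mkQ_surjective _ (y.val c)
  refine ⟨u₀ + k, by simp, ?_⟩
  have hsub : of I M (u₀ + k) - x = map I (ker f).subtype (of I _ k - y) := by
    rw [map_sub, map_of, hy, map_add, Submodule.subtype_apply]
    abel
  rw [hsub, map_val_apply, val_sub_apply, of_apply, hk, sub_self, _root_.map_zero]

end Noetherian

end AdicCompletion

open AdicCompletion

/-- an inhomogeneous linear system `M·u = b` over a Noetherian local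
ring that is solvable over the completion is solvable over the ring, with
solutions approximating a given formal solution mod `m^c`. -/
theorem linear_system_approximation_completion
    (A : Type*) [CommRing A] [IsLocalRing A] [IsNoetherianRing A]
    (s t : ℕ) (M : Matrix (Fin t) (Fin s) A) (b : Fin t → A)
    (uhat : Fin s → AdicCompletion (maximalIdeal A) A)
    (hsol : ∀ j, ∑ i, algebraMap A (AdicCompletion (maximalIdeal A) A) (M j i) * uhat i =
      algebraMap A (AdicCompletion (maximalIdeal A) A) (b j))
    (c : ℕ) :
    ∃ u : Fin s → A,
      M.mulVec u = b ∧
      (∀ i, algebraMap A (AdicCompletion (maximalIdeal A) A) (u i) - uhat i ∈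
        Ideal.map (algebraMap A (AdicCompletion (maximalIdeal A) A)) (maximalIdeal A ^ c)) := by
  obtain ⟨x, rfl⟩ := (piEquivFin (maximalIdeal A) s).surjective uhat
  have hx : map _ M.mulVecLin x = of _ _ b := by
    refine (piEquivFin (maximalIdeal A) t).injective (funext fun j => ?_)
    simpa [pi_map_mulVecLin, pi_of, AdicCompletion.algebraMap_apply] using hsol j
  obtain ⟨u, hu, hc⟩ := exists_apply_eq_and_val_sub_eq_zero hx c
  refine ⟨u, hu, fun i => ?_⟩
  have hdiff : algebraMap A _ (u i) - pi _ _ x i = pi _ _ (of _ _ u - x) i := by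
    rw [map_sub, Pi.sub_apply, pi_of, AdicCompletion.algebraMap_apply, Algebra.algebraMap_self,
      RingHom.id_apply]
  rw [mem_map_pow_iff_val_eq_zero (maximalIdeal A).fg_of_isNoetherianRing, piEquivFin_apply,
    hdiff, pi_apply_coe, hc, _root_.map_zero]
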